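/- arXiv:2407.06929 — 2 statements merged into one kernel-verified Lean document; each statement's English description precedes it below -/
import Mathlib

section
/- For every real y: if |y − 1| ≤ 1/2 then |β̂(iy)| ≤ 1 − (y − 1)²; if |y + 1| ≤ 1/2 then |β̂(iy)| ≤ 1 − (y + 1)²; and if both |y − 1| > 1/2 and |y + 1| > 1/2 then |β̂(iy)| ≤ 3/4. -/
/-
Writing `cos s = (e^{is} + e^{-is}) / 2` and integrating `e^{ias}` over the full period `[0, 2π]`
gives `β̂(iy) = -e^{iπy} (sinc π(y-1) + sinc π(y+1) + sinc(πy) / 2)`. Since `sin` only changes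
sign under shifts by `π`, this real profile equals `sinc(πy) (3y² + 1) / (2(1 - y²))`, and around
`y = 1 + u` it equals `sinc(πu) (3u² + 6u + 4) / (2(u + 1)(u + 2))`. The quintic Taylor bound
for `sin` together with `3.14 < π < 3.15` reduces the bounds near `y = 1` and for `0 ≤ y < 1/2`
to polynomial inequalities; for `y > 3/2` the estimate `|sinc x| ≤ 1/|x|` suffices. The profile
is even, which covers `y ≤ 0`.
-/

open Complex intervalIntegral

/-- The scaled filter-transfer function
`β̂(z) = (1/π) ∫₀^{2π} (cos s − 1/4) e^{z s} ds`. -/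
noncomputable def betaHat (z : ℂ) : ℂ :=
  (1 / (Real.pi : ℂ)) * ∫ s in (0:ℝ)..(2 * Real.pi), ((Real.cos s : ℂ) - 1/4) * Complex.exp (z * s)

open scoped Real

namespace Real

theorem cos_le_one_sub_sq_div_two_add_pow_four (x : ℝ) : cos x ≤ 1 - x ^ 2 / 2 + x ^ 4 / 24 := by
  wlog hx : 0 ≤ x
  · simpa [Even.neg_pow (by decide : Even 4)] using this (-x) (by linarith)
  let f (t : ℝ) : ℝ := 1 - t ^ 2 / 2 + t ^ 4 / 24 - cos t
  have hderiv (t : ℝ) : deriv f t = sin t - (t - t ^ 3 / 6) := by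
    simp (disch := fun_prop) [f]
    ring
  have hmono : MonotoneOn f (Set.Ici 0) := by
    refine monotoneOn_of_deriv_nonneg (convex_Ici 0) (by fun_prop) (by fun_prop) fun t ht ↦ ?_
    rw [interior_Ici] at ht
    rw [hderiv]
    linarith [sin_ge_sub_cube (le_of_lt ht)]
  have := hmono Set.self_mem_Ici hx hx
  simp only [f] at this
  norm_num at this
  linarith

theorem sin_le_sub_cube_add_pow_five {x : ℝ} (hx : 0 ≤ x) :
    sin x ≤ x - x ^ 3 / 6 + x ^ 5 / 120 := by
  let f (t : ℝ) : ℝ := t - t ^ 3 / 6 + t ^ 5 / 120 - sin t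
  have hderiv (t : ℝ) : deriv f t = 1 - t ^ 2 / 2 + t ^ 4 / 24 - cos t := by
    simp (disch := fun_prop) [f]
    ring
  have hmono : MonotoneOn f (Set.Ici 0) := by
    refine monotoneOn_of_deriv_nonneg (convex_Ici 0) (by fun_prop) (by fun_prop) fun t _ ↦ ?_
    rw [hderiv]
    linarith [cos_le_one_sub_sq_div_two_add_pow_four t]
  have := hmono Set.self_mem_Ici hx hx
  simp only [f] at this
  norm_num at this
  linarith

theorem sinc_mul_self (x : ℝ) : sinc x * x = sin x := by
  rcases eq_or_ne x 0 with rfl | hx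
  · simp
  · rw [sinc_of_ne_zero hx, div_mul_cancel₀ _ hx]

theorem sinc_le_one_sub_sq_div_six_add_pow_four (x : ℝ) :
    sinc x ≤ 1 - x ^ 2 / 6 + x ^ 4 / 120 := by
  wlog hx : 0 ≤ x
  · simpa [sinc_neg, Even.neg_pow (by decide : Even 4)] using this (-x) (by linarith)
  rcases hx.eq_or_lt with rfl | hx
  · simp
  rw [sinc_of_ne_zero hx.ne', div_le_iff₀ hx]
  linarith [sin_le_sub_cube_add_pow_five hx.le]

theorem sinc_nonneg_of_abs_le_pi {x : ℝ} (hx : |x| ≤ π) : 0 ≤ sinc x := by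
  wlog hx0 : 0 ≤ x
  · simpa [sinc_neg] using this (x := -x) (by rwa [abs_neg]) (by linarith)
  rw [sinc_apply]
  split_ifs
  · exact zero_le_one
  · exact div_nonneg (sin_nonneg_of_nonneg_of_le_pi hx0 (le_of_abs_le hx)) hx0

theorem abs_sinc_le_inv_abs {x : ℝ} (hx : x ≠ 0) : |sinc x| ≤ |x|⁻¹ := by
  rw [sinc_of_ne_zero hx, abs_div, div_eq_mul_inv]
  exact mul_le_of_le_one_left (by positivity) (abs_sin_le_one x)

theorem sinc_pi_mul_add_int_mul (u : ℝ) (n : ℤ) :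
    sinc (π * (u + n)) * (u + n) = (-1) ^ n * (sinc (π * u) * u) := by
  have h := sin_add_int_mul_pi (π * u) n
  rw [← sinc_mul_self, ← sinc_mul_self, show π * u + n * π = π * (u + n) by ring] at h
  apply mul_left_cancel₀ pi_ne_zero
  linear_combination h

end Real

theorem sinc_pi_mul_le_poly (u : ℝ) :
    Real.sinc (π * u) ≤ 1 - (3.14 * u) ^ 2 / 6 + (3.15 * u) ^ 4 / 120 := by
  have hlo : 3.14 ^ 2 * u ^ 2 ≤ π ^ 2 * u ^ 2 := by gcongr; exact Real.pi_gt_d2.le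
  have hhi : π ^ 4 * u ^ 4 ≤ 3.15 ^ 4 * u ^ 4 := by gcongr; exact Real.pi_lt_d2.le
  linarith [Real.sinc_le_one_sub_sq_div_six_add_pow_four (π * u)]

theorem integral_exp_I_mul_ofReal_mul (a : ℝ) :
    ∫ s in (0 : ℝ)..2 * π, exp (I * a * s) = 2 * π * exp (π * a * I) * Real.sinc (π * a) := by
  rcases eq_or_ne a 0 with rfl | ha
  · simp
  have hIa : I * a ≠ 0 := mul_ne_zero I_ne_zero (ofReal_ne_zero.2 ha)
  have hsq : exp (I * a * (2 * π : ℝ)) = exp (π * a * I) ^ 2 := by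
    rw [← exp_nat_mul]; push_cast; ring_nf
  have hsin : 2 * sin (π * a) * I = exp (π * a * I) - (exp (π * a * I))⁻¹ := by
    rw [two_sin, neg_mul, exp_neg]
    linear_combination ((exp (π * a * I))⁻¹ - exp (π * a * I)) * I_sq
  rw [integral_exp_mul_complex hIa, Real.sinc_of_ne_zero (by positivity), hsq]
  push_cast
  rw [mul_zero, exp_zero]
  field_simp
  congr 1
  rw [show I * exp (π * a * I) * 2 * sin (π * a) = exp (π * a * I) * (2 * sin (π * a) * I) by ring,
    hsin, mul_sub, mul_inv_cancel₀ (exp_ne_zero _)]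
  ring

noncomputable def betaProfile (y : ℝ) : ℝ :=
  Real.sinc (π * (y - 1)) + Real.sinc (π * (y + 1)) + Real.sinc (π * y) / 2

theorem cos_sub_quarter_mul_exp (y s : ℝ) :
    (Real.cos s - 1 / 4 : ℂ) * exp (I * y * s) =
      exp (I * (y + 1 : ℝ) * s) / 2 + exp (I * (y - 1 : ℝ) * s) / 2 - exp (I * y * s) / 4 := by
  have hplus : exp (I * (y + 1 : ℝ) * s) = exp (s * I) * exp (I * y * s) := by
    rw [← exp_add]; push_cast; ring_nf
  have hminus : exp (I * (y - 1 : ℝ) * s) = exp (-s * I) * exp (I * y * s) := by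
    rw [← exp_add]; push_cast; ring_nf
  rw [ofReal_cos, cos, hplus, hminus]
  ring

theorem betaHat_I_mul (y : ℝ) : betaHat (I * y) = -exp (π * y * I) * betaProfile y := by
  have hint (a : ℝ) :
      IntervalIntegrable (fun s : ℝ ↦ exp (I * a * s)) MeasureTheory.volume 0 (2 * π) :=
    (by fun_prop : Continuous _).intervalIntegrable _ _
  have hplus : exp (π * (y + 1 : ℝ) * I) = -exp (π * y * I) := by
    rw [show (π : ℂ) * (y + 1 : ℝ) * I = π * y * I + π * I by push_cast; ring, exp_add,
      exp_pi_mul_I, mul_neg_one]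
  have hminus : exp (π * (y - 1 : ℝ) * I) = -exp (π * y * I) := by
    rw [show (π : ℂ) * (y - 1 : ℝ) * I = π * y * I - π * I by push_cast; ring, exp_sub,
      exp_pi_mul_I, div_neg, div_one]
  rw [betaHat, integral_congr fun s _ ↦ cos_sub_quarter_mul_exp y s,
    integral_sub (((hint _).div_const _).add ((hint _).div_const _)) ((hint _).div_const _),
    integral_add ((hint _).div_const _) ((hint _).div_const _),
    integral_div, integral_div, integral_div, integral_exp_I_mul_ofReal_mul,
    integral_exp_I_mul_ofReal_mul, integral_exp_I_mul_ofReal_mul, hplus, hminus, betaProfile]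
  push_cast
  field_simp
  ring

theorem norm_betaHat_I_mul (y : ℝ) : ‖betaHat (I * y)‖ = |betaProfile y| := by
  rw [betaHat_I_mul, norm_mul, norm_neg, ← ofReal_mul, norm_exp_ofReal_mul_I, one_mul, norm_real,
    Real.norm_eq_abs]

theorem betaProfile_neg (y : ℝ) : betaProfile (-y) = betaProfile y := by
  rw [betaProfile, betaProfile, show π * (-y - 1) = -(π * (y + 1)) by ring,
    show π * (-y + 1) = -(π * (y - 1)) by ring, mul_neg, Real.sinc_neg, Real.sinc_neg,
    Real.sinc_neg]
  ring

theorem betaProfile_mul_eq (y : ℝ) :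
    betaProfile y * (2 * (1 - y ^ 2)) = Real.sinc (π * y) * (3 * y ^ 2 + 1) := by
  have hminus := Real.sinc_pi_mul_add_int_mul y (-1)
  have hplus := Real.sinc_pi_mul_add_int_mul y 1
  push_cast at hminus hplus
  rw [← sub_eq_add_neg] at hminus
  rw [betaProfile]
  linear_combination (-2 * (1 + y)) * hminus + 2 * (1 - y) * hplus

theorem betaProfile_one_add_mul_eq (u : ℝ) :
    betaProfile (1 + u) * (2 * (u + 1) * (u + 2)) =
      Real.sinc (π * u) * (3 * u ^ 2 + 6 * u + 4) := by
  have hone := Real.sinc_pi_mul_add_int_mul u 1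
  have htwo := Real.sinc_pi_mul_add_int_mul u 2
  push_cast at hone htwo
  rw [betaProfile, show π * (1 + u - 1) = π * u by ring, show π * (1 + u + 1) = π * (u + 2) by ring,
    show π * (1 + u) = π * (u + 1) by ring]
  linear_combination (2 * (u + 1)) * htwo + (u + 2) * hone

theorem abs_betaProfile_le_of_abs_sub_one_le {y : ℝ} (hy : |y - 1| ≤ 1 / 2) :
    |betaProfile y| ≤ 1 - (y - 1) ^ 2 := by
  obtain ⟨u, rfl⟩ : ∃ u, y = 1 + u := ⟨y - 1, by ring⟩
  rw [add_sub_cancel_left] at hy ⊢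
  obtain ⟨hlo, hhi⟩ := abs_le.1 hy
  have hD : 0 < 2 * (u + 1) * (u + 2) := by nlinarith
  have hsinc : 0 ≤ Real.sinc (π * u) := Real.sinc_nonneg_of_abs_le_pi <| by
    rw [abs_mul, abs_of_pos Real.pi_pos]; nlinarith [Real.pi_pos]
  have hpoly : (1 - (3.14 * u) ^ 2 / 6 + (3.15 * u) ^ 4 / 120) * (3 * u ^ 2 + 6 * u + 4) ≤
      (1 - u ^ 2) * (2 * (u + 1) * (u + 2)) := by
    nlinarith [mul_nonneg (mul_nonneg (sq_nonneg u) (by linarith : (0:ℝ) ≤ u + 1/2))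
        (by linarith : (0:ℝ) ≤ 1/2 - u),
      mul_nonneg (sq_nonneg u) (by linarith : (0:ℝ) ≤ u + 1/2),
      mul_nonneg (sq_nonneg u) (by linarith : (0:ℝ) ≤ 1/2 - u), pow_nonneg (sq_nonneg u) 2]
  have hprof := betaProfile_one_add_mul_eq u
  refine le_of_mul_le_mul_right ?_ hD
  calc |betaProfile (1 + u)| * (2 * (u + 1) * (u + 2))
      = Real.sinc (π * u) * (3 * u ^ 2 + 6 * u + 4) := by
        rw [← abs_of_pos hD, ← abs_mul, hprof, abs_of_nonneg (by nlinarith)]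
    _ ≤ (1 - (3.14 * u) ^ 2 / 6 + (3.15 * u) ^ 4 / 120) * (3 * u ^ 2 + 6 * u + 4) := by
        gcongr
        · nlinarith
        · exact sinc_pi_mul_le_poly u
    _ ≤ _ := hpoly

theorem abs_betaProfile_le_three_quarters {y : ℝ} (hy : 0 ≤ y) (h : 1 / 2 < |y - 1|) :
    |betaProfile y| ≤ 3 / 4 := by
  have hprof : |betaProfile y| * |2 * (1 - y ^ 2)| = |Real.sinc (π * y)| * (3 * y ^ 2 + 1) := by
    rw [← abs_mul, betaProfile_mul_eq, abs_mul, abs_of_pos (by positivity : 0 < 3 * y ^ 2 + 1)]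
  rcases lt_abs.1 h with hbig | hsmall
  · have hD : 0 < 2 * (y ^ 2 - 1) := by nlinarith
    have hπy : 0 < π * y := mul_pos Real.pi_pos (by linarith)
    refine le_of_mul_le_mul_right ?_ hD
    calc |betaProfile y| * (2 * (y ^ 2 - 1))
        = |Real.sinc (π * y)| * (3 * y ^ 2 + 1) := by
          rw [← hprof, abs_of_neg (by nlinarith : 2 * (1 - y ^ 2) < 0)]; ring
      _ ≤ (π * y)⁻¹ * (3 * y ^ 2 + 1) := by
          gcongr
          simpa [abs_of_pos hπy] using Real.abs_sinc_le_inv_abs hπy.ne'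
      _ ≤ 3 / 4 * (2 * (y ^ 2 - 1)) := by
          rw [inv_mul_le_iff₀ hπy]
          nlinarith [Real.pi_gt_d2, sq_nonneg (y - 3 / 2),
            mul_nonneg (by linarith : (0:ℝ) ≤ y - 3 / 2) (sq_nonneg y)]
  · have hD : 0 < 2 * (1 - y ^ 2) := by nlinarith
    have hsinc : 0 ≤ Real.sinc (π * y) := Real.sinc_nonneg_of_abs_le_pi <| by
      rw [abs_mul, abs_of_pos Real.pi_pos, abs_of_nonneg hy]; nlinarith [Real.pi_pos]
    refine le_of_mul_le_mul_right ?_ hD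
    calc |betaProfile y| * (2 * (1 - y ^ 2))
        = Real.sinc (π * y) * (3 * y ^ 2 + 1) := by
          rw [← abs_of_pos hD, hprof, abs_of_nonneg hsinc]
      _ ≤ (1 - (3.14 * y) ^ 2 / 6 + (3.15 * y) ^ 4 / 120) * (3 * y ^ 2 + 1) := by
          gcongr
          exact sinc_pi_mul_le_poly y
      _ ≤ 3 / 4 * (2 * (1 - y ^ 2)) := by
          nlinarith [sq_nonneg y, mul_nonneg (sq_nonneg y) (by linarith : (0:ℝ) ≤ 1 / 2 - y),
            mul_nonneg hy (by linarith : (0:ℝ) ≤ 1 / 2 - y), pow_nonneg hy 3, pow_nonneg hy 4]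

theorem betaHat_imaginary_axis_bounds (y : ℝ) :
    (|y - 1| ≤ 1/2 → ‖betaHat (Complex.I * y)‖ ≤ 1 - (y - 1)^2) ∧
    (|y + 1| ≤ 1/2 → ‖betaHat (Complex.I * y)‖ ≤ 1 - (y + 1)^2) ∧
    (1/2 < |y - 1| → 1/2 < |y + 1| → ‖betaHat (Complex.I * y)‖ ≤ 3/4) := by
  rw [norm_betaHat_I_mul]
  have habs_neg : |-y - 1| = |y + 1| := by rw [show -y - 1 = -(y + 1) by ring, abs_neg]
  refine ⟨abs_betaProfile_le_of_abs_sub_one_le, fun hnear ↦ ?_, fun hfar₁ hfar₂ ↦ ?_⟩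
  · rw [← betaProfile_neg, show (y + 1) ^ 2 = (-y - 1) ^ 2 by ring]
    exact abs_betaProfile_le_of_abs_sub_one_le (habs_neg ▸ hnear)
  · rcases le_total 0 y with hy | hy
    · exact abs_betaProfile_le_three_quarters hy hfar₁
    · rw [← betaProfile_neg]
      exact abs_betaProfile_le_three_quarters (neg_nonneg.2 hy) (habs_neg ▸ hfar₂)
end

section
/- Let ω > 0, T = 2π/ω, A an m×m complex matrix, and F, ŵ ∈ ℂ^m such that iω·ŵ = A·ŵ − F. Then the function w(t) := e^{iωt}·ŵ satisfies the differential equation w'(t) = A·w(t) − F·e^{iωt} for all t ∈ ℝ, and moreover (2/T) ∫₀^T (cos(ωt) − 1/4)·w(t) dt = ŵ; that is, ŵ is a fixed point of the semi-discrete WaveHoltz filter. -/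
open Complex intervalIntegral

/-!
Differentiating `e^{iωt} ŵ` gives `iω e^{iωt} ŵ`, which is the right-hand side by the Helmholtz
relation. For the filter, `(cos θ - 1/4) e^{iθ} = e^{2iθ}/2 + 1/2 - e^{iθ}/4`; the two nonconstant
harmonics integrate to zero over a period `T = 2π/ω`, so the filter multiplies `ŵ` by
`(2/T) · (T/2) = 1`.
-/

noncomputable def waveHoltzFilter {E : Type*} [NormedAddCommGroup E] [NormedSpace ℂ E]
    (ω : ℝ) (w : ℝ → E) : E :=
  (2 / ((2 * Real.pi / ω : ℝ) : ℂ)) •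
    ∫ t in (0:ℝ)..(2 * Real.pi / ω), (((Real.cos (ω * t) : ℂ) - 1/4) • w t)

theorem hasDerivAt_exp_mul_smul_of_smul_eq {E : Type*} [NormedAddCommGroup E] [NormedSpace ℂ E]
    (A : E →ₗ[ℂ] E) {c : ℂ} {v F : E} (h : c • v = A v - F) (t : ℝ) :
    HasDerivAt (fun s : ℝ => exp (c * s) • v) (A (exp (c * t) • v) - exp (c * t) • F) t := by
  have hexp : HasDerivAt (fun s : ℝ => exp (c * s)) (exp (c * t) * c) t := by
    simpa using ((ofRealCLM.hasDerivAt (x := t)).const_mul c).cexp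
  refine (hexp.smul_const v).congr_deriv ?_
  rw [mul_smul, h, smul_sub, map_smul]

theorem integral_exp_int_mul_over_period {ω : ℝ} (hω : ω ≠ 0) {n : ℤ} (hn : n ≠ 0) :
    ∫ t in (0:ℝ)..(2 * Real.pi / ω), exp (n * (I * ω) * t) = 0 := by
  have hω' : (ω : ℂ) ≠ 0 := ofReal_ne_zero.mpr hω
  have hc : (n : ℂ) * (I * ω) ≠ 0 := by simp [hn, hω]
  have hperiod : (n : ℂ) * (I * ω) * ((2 * Real.pi / ω : ℝ) : ℂ) = n * (2 * Real.pi * I) := by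
    push_cast
    field_simp
  rw [integral_exp_mul_complex hc, hperiod, exp_int_mul_two_pi_mul_I]
  simp

theorem cos_sub_quarter_mul_exp_I_mul (x : ℂ) :
    (cos x - 1/4) * exp (I * x) = exp ((2 : ℤ) * (I * x)) / 2 + 1/2 - exp ((1 : ℤ) * (I * x)) / 4 := by
  have hsq : exp ((2 : ℤ) * (I * x)) = exp (I * x) * exp (I * x) := by
    rw [← exp_add, Int.cast_two, two_mul]
  have hneg : exp (-x * I) = (exp (I * x))⁻¹ := by
    rw [← exp_neg]; ring_nf
  rw [cos, hsq, hneg, mul_comm x I, Int.cast_one, one_mul]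
  field_simp

theorem integral_cos_sub_quarter_mul_exp {ω : ℝ} (hω : ω ≠ 0) :
    ∫ t in (0:ℝ)..(2 * Real.pi / ω), ((Real.cos (ω * t) : ℂ) - 1/4) * exp (I * ω * t) =
      ((2 * Real.pi / ω : ℝ) : ℂ) / 2 := by
  have hintegrand (t : ℝ) : ((Real.cos (ω * t) : ℂ) - 1/4) * exp (I * ω * t) =
      exp ((2 : ℤ) * (I * ω) * t) / 2 + 1/2 - exp ((1 : ℤ) * (I * ω) * t) / 4 := by
    simpa only [ofReal_cos, ofReal_mul, mul_assoc] using cos_sub_quarter_mul_exp_I_mul (ω * t)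
  have hcont (n : ℤ) : Continuous fun t : ℝ => exp (n * (I * ω) * t) := by fun_prop
  simp only [hintegrand]
  rw [integral_sub (((hcont 2).div_const _).intervalIntegrable _ _ |>.add intervalIntegrable_const)
      (((hcont 1).div_const _).intervalIntegrable _ _),
    integral_add (((hcont 2).div_const _).intervalIntegrable _ _) intervalIntegrable_const,
    integral_const,
    integral_div, integral_div, integral_exp_int_mul_over_period hω two_ne_zero,
    integral_exp_int_mul_over_period hω one_ne_zero]
  simp [div_eq_mul_inv]

theorem waveHoltzFilter_exp_mul_smul {E : Type*} [NormedAddCommGroup E] [NormedSpace ℂ E]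
    [CompleteSpace E] {ω : ℝ} (hω : ω ≠ 0) (v : E) :
    waveHoltzFilter ω (fun t => exp (I * ω * t) • v) = v := by
  have hT : ((2 * Real.pi / ω : ℝ) : ℂ) ≠ 0 := by
    exact_mod_cast div_ne_zero (by positivity) hω
  simp only [waveHoltzFilter, smul_smul]
  rw [intervalIntegral.integral_smul_const, integral_cos_sub_quarter_mul_exp hω, smul_smul,
    div_mul_div_cancel₀ hT, div_self two_ne_zero, one_smul]

theorem waveholtz_fixed_point {m : ℕ} (ω : ℝ) (hω : 0 < ω)
    (A : Matrix (Fin m) (Fin m) ℂ) (F what : Fin m → ℂ)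
    (hHelm : (Complex.I * ω) • what = A.mulVec what - F) :
    (∀ t : ℝ, HasDerivAt (fun s : ℝ => Complex.exp (Complex.I * ω * s) • what)
        (A.mulVec (Complex.exp (Complex.I * ω * t) • what) -
          Complex.exp (Complex.I * ω * t) • F) t) ∧
      (2 / ((2 * Real.pi / ω : ℝ) : ℂ)) •
          (∫ t in (0:ℝ)..(2 * Real.pi / ω),
            (((Real.cos (ω * t) : ℂ) - 1/4) • (Complex.exp (Complex.I * ω * t) • what))) =
        what :=
  ⟨hasDerivAt_exp_mul_smul_of_smul_eq A.mulVecLin hHelm,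
    waveHoltzFilter_exp_mul_smul hω.ne' what⟩
end
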